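/- arXiv:0707.0785 — 6 statements merged into one kernel-verified Lean document; each statement's English description precedes it below -/
import Mathlib

section
/- Let M be a cancellative conical monoid in which any two elements admitting a common right multiple admit a right lcm. For a, b in M such that a ∨ b exists, define a\b as the unique element with a ∨ b = a(a\b). Then for a, b, c in M, (ab)\c exists if and only if b\(a\c) exists (meaning a\c exists and then b\(a\c) exists), and in that case (ab)\c = b\(a\c). -/
/-- `LDvd b a` : `b` left-divides `a`, i.e. `a = b * d` for some `d`. -/
def LDvd {M : Type*} [Monoid M] (b a : M) : Prop := ∃ d, a = b * d

/-- `c` is a right lcm of `a` and `b`. -/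
def IsRightLcm {M : Type*} [Monoid M] (a b c : M) : Prop :=
  LDvd a c ∧ LDvd b c ∧ ∀ m, LDvd a m → LDvd b m → LDvd c m

/-- `1` is the only invertible element. -/
def Conical (M : Type*) [Monoid M] : Prop := ∀ u : M, IsUnit u → u = 1

/-- Left and right cancellativity. -/
def Cancellative (M : Type*) [Monoid M] : Prop :=
  (∀ a b c : M, a * b = a * c → b = c) ∧ (∀ a b c : M, b * a = c * a → b = c)

/-- `IsRes a b r` : `r` is the residue `a \ b`, i.e. `a * r` is the right lcm `a ∨ b`. -/
def IsRes {M : Type*} [Monoid M] (a b r : M) : Prop := IsRightLcm a b (a * r)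

/-- The set of irreducible elements of `M`. -/
def Irr (M : Type*) [Monoid M] : Set M :=
  {a | a ≠ 1 ∧ ∀ b c : M, a = b * c → b = 1 ∨ c = 1}

/-- `a` is quasi-central: `aΣ = Σa` where `Σ` is the set of irreducible elements. -/
def QuasiCentral {M : Type*} [Monoid M] (a : M) : Prop :=
  (fun x => a * x) '' Irr M = (fun x => x * a) '' Irr M

/-- `g` is a left gcd of `a` and `b`. -/
def IsLeftGcd {M : Type*} [Monoid M] (a b g : M) : Prop :=
  LDvd g a ∧ LDvd g b ∧ ∀ d, LDvd d a → LDvd d b → LDvd d g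

/-- `j` is the join of `x` and `y` inside the lattice `↓(a)` of left divisors of `a`. -/
def IsJoinIn {M : Type*} [Monoid M] (a x y j : M) : Prop :=
  LDvd j a ∧ LDvd x j ∧ LDvd y j ∧ ∀ m, LDvd m a → LDvd x m → LDvd y m → LDvd j m

/-- A (left) divisibility monoid : cancellative, finitely generated by its irreducible
elements, any two elements admit a left gcd, and every `↓(a)` is a finite distributive
lattice under left divisibility (meets are left gcds, joins exist, distributivity holds). -/
structure IsDivisibilityMonoid (M : Type*) [Monoid M] : Prop where
  mul_left_cancel : ∀ a b c : M, a * b = a * c → b = c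
  mul_right_cancel : ∀ a b c : M, b * a = c * a → b = c
  irr_finite : (Irr M).Finite
  irr_gen : ∀ a : M, a ∈ Submonoid.closure (Irr M)
  exists_gcd : ∀ a b : M, ∃ g, IsLeftGcd a b g
  divisors_finite : ∀ a : M, {b : M | LDvd b a}.Finite
  exists_join : ∀ a x y : M, LDvd x a → LDvd y a → ∃ j, IsJoinIn a x y j
  distrib : ∀ a x y z : M, LDvd x a → LDvd y a → LDvd z a →
    ∀ jyz g gxy gxz j', IsJoinIn a y z jyz → IsLeftGcd x jyz g →
      IsLeftGcd x y gxy → IsLeftGcd x z gxz → IsJoinIn a gxy gxz j' → g = j'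

/-- `d` is the (right) local delta of `a`: the right lcm of the set `{b \ a : b ∈ M}`,
all of whose elements are required to exist. -/
def IsLocalDelta {M : Type*} [Monoid M] (a d : M) : Prop :=
  (∀ b : M, ∃ r, IsRes b a r) ∧
  (∀ b r : M, IsRes b a r → LDvd r d) ∧
  ∀ m : M, (∀ b r : M, IsRes b a r → LDvd r m) → LDvd d m

/-
Write `a ∨ c = a·s` and `b ∨ s = b·t`. Then `a·b·t` is a common multiple of `a·b` and `c`, and any
common multiple `a·b·v` of them is one of `a` and `c`, hence `a·s` divides it, i.e. (cancelling `a`)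
`s` divides `b·v`; so `b·t` divides `b·v`. Conversely, if `(a·b) ∨ c` exists it is a common multiple
of `a` and `c`, and of `b` and `s` after cancelling `a`, so both lcms exist.
-/

theorem ldvd_iff_dvd {M : Type*} [Monoid M] {a b : M} : LDvd a b ↔ a ∣ b := Iff.rfl

section Residue

variable {M : Type*} [Monoid M] {a b c s t : M}

theorem IsRes.dvd_of_dvd_mul [IsLeftCancelMul M] {v : M} (hs : IsRes a c s) (hv : c ∣ a * v) :
    s ∣ v := by
  obtain ⟨u, hu⟩ := hs.2.2 (a * v) ⟨v, rfl⟩ hv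
  exact ⟨u, mul_left_cancel (hu.trans (mul_assoc a s u))⟩

theorem exists_isRes_of_dvd_of_dvd
    (hlcm : ∀ a b : M, (∃ m, LDvd a m ∧ LDvd b m) → ∃ c, IsRightLcm a b c) {m : M}
    (ha : a ∣ m) (hc : c ∣ m) : ∃ s, IsRes a c s := by
  obtain ⟨l, ⟨s, rfl⟩, hl⟩ := hlcm a c ⟨m, ha, hc⟩
  exact ⟨s, ⟨s, rfl⟩, hl⟩

theorem IsRes.mul [IsLeftCancelMul M] (hs : IsRes a c s) (ht : IsRes b s t) :
    IsRes (a * b) c t := by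
  refine ⟨⟨t, rfl⟩, ?_, ?_⟩
  · rw [ldvd_iff_dvd, mul_assoc]
    exact (ldvd_iff_dvd.1 hs.2.1).trans (mul_dvd_mul_left a ht.2.1)
  · rintro m ⟨v, rfl⟩ hcm
    rw [mul_assoc] at hcm
    have hsv : s ∣ b * v := hs.dvd_of_dvd_mul hcm
    rw [ldvd_iff_dvd, mul_assoc, mul_assoc]
    exact mul_dvd_mul_left a (ht.2.2 (b * v) ⟨v, rfl⟩ hsv)

theorem IsRes.exists_isRes_isRes [IsLeftCancelMul M]
    (hlcm : ∀ a b : M, (∃ m, LDvd a m ∧ LDvd b m) → ∃ c, IsRightLcm a b c) {r : M}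
    (hr : IsRes (a * b) c r) : ∃ s, IsRes a c s ∧ ∃ t, IsRes b s t := by
  have hcm : c ∣ a * (b * r) := by rw [← mul_assoc]; exact hr.2.1
  obtain ⟨s, hs⟩ := exists_isRes_of_dvd_of_dvd hlcm (dvd_mul_right a (b * r)) hcm
  exact ⟨s, hs, exists_isRes_of_dvd_of_dvd hlcm (dvd_mul_right b r) (hs.dvd_of_dvd_mul hcm)⟩

end Residue

theorem stmt4_general {M : Type*} [Monoid M] (hc : Cancellative M)
    (hlcm : ∀ a b : M, (∃ m, LDvd a m ∧ LDvd b m) → ∃ c, IsRightLcm a b c)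
    (a b c : M) :
    ((∃ r, IsRes (a * b) c r) ↔ ∃ s, IsRes a c s ∧ ∃ t, IsRes b s t) ∧
    (∀ s t, IsRes a c s → IsRes b s t → IsRes (a * b) c t) := by
  have : IsLeftCancelMul M := ⟨fun a _ _ h => hc.1 a _ _ h⟩
  refine ⟨⟨fun ⟨_, hr⟩ => hr.exists_isRes_isRes hlcm, ?_⟩, fun _ _ hs ht => hs.mul ht⟩
  rintro ⟨s, hs, t, ht⟩
  exact ⟨t, hs.mul ht⟩

theorem stmt4 {M : Type*} [Monoid M] (hc : Cancellative M) (hcon : Conical M)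
    (hlcm : ∀ a b : M, (∃ m, LDvd a m ∧ LDvd b m) → ∃ c, IsRightLcm a b c)
    (a b c : M) :
    ((∃ r, IsRes (a * b) c r) ↔ ∃ s, IsRes a c s ∧ ∃ t, IsRes b s t) ∧
    (∀ s t, IsRes a c s → IsRes b s t → IsRes (a * b) c t) :=
  stmt4_general hc hlcm a b c
end

section
/- Let M be a cancellative conical monoid in which any two elements admitting a common right multiple admit a right lcm. For a, b, c in M, if a ∨ b exists, then c\(a ∨ b) exists if and only if both c\a and c\b exist and (c\a) ∨ (c\b) exists, and in that case c\(a ∨ b) = (c\a) ∨ (c\b). -/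
-- `LDvd a b` unfolds to `a ∣ b`, so Mathlib's divisibility lemmas apply to it directly.

section Residue

variable {M : Type*} [Monoid M]

theorem LDvd.of_mul_left [IsLeftCancelMul M] {a b c : M} (h : LDvd (c * a) (c * b)) :
    LDvd a b := by
  obtain ⟨d, hd⟩ := h
  exact ⟨d, mul_left_cancel (hd.trans (mul_assoc c a d))⟩

theorem IsRightLcm.lDvd_of_lDvd {a b j m : M} (hj : IsRightLcm a b j) (hm : LDvd j m) :
    LDvd a m ∧ LDvd b m :=
  ⟨dvd_trans hj.1 hm, dvd_trans hj.2.1 hm⟩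

theorem exists_isRes_of_lDvd
    (hlcm : ∀ a b : M, (∃ m, LDvd a m ∧ LDvd b m) → ∃ c, IsRightLcm a b c)
    {a c m : M} (hcm : LDvd c m) (ham : LDvd a m) : ∃ s, IsRes c a s ∧ LDvd (c * s) m := by
  obtain ⟨l, hl⟩ := hlcm c a ⟨m, hcm, ham⟩
  obtain ⟨s, rfl⟩ := hl.1
  exact ⟨s, hl, hl.2.2 m hcm ham⟩

theorem IsRightLcm.isRes_of_isRes [IsLeftCancelMul M] {a b c j s t u : M}
    (hj : IsRightLcm a b j) (hs : IsRes c a s) (ht : IsRes c b t) (hu : IsRightLcm s t u) :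
    IsRes c j u := by
  refine ⟨⟨u, rfl⟩, hj.2.2 _ ?_ ?_, ?_⟩
  · exact dvd_trans hs.2.1 (mul_dvd_mul_left c hu.1)
  · exact dvd_trans ht.2.1 (mul_dvd_mul_left c hu.2.1)
  · rintro m ⟨w, rfl⟩ hjm
    obtain ⟨ham, hbm⟩ := hj.lDvd_of_lDvd hjm
    have hsw : LDvd s w := LDvd.of_mul_left (hs.2.2 _ ⟨w, rfl⟩ ham)
    have htw : LDvd t w := LDvd.of_mul_left (ht.2.2 _ ⟨w, rfl⟩ hbm)
    exact mul_dvd_mul_left c (hu.2.2 w hsw htw)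

theorem IsRightLcm.exists_isRes_of_isRes [IsLeftCancelMul M]
    (hlcm : ∀ a b : M, (∃ m, LDvd a m ∧ LDvd b m) → ∃ c, IsRightLcm a b c)
    {a b c j r : M} (hj : IsRightLcm a b j) (hr : IsRes c j r) :
    ∃ s t u, IsRes c a s ∧ IsRes c b t ∧ IsRightLcm s t u := by
  obtain ⟨ham, hbm⟩ := hj.lDvd_of_lDvd hr.2.1
  obtain ⟨s, hs, hsr⟩ := exists_isRes_of_lDvd hlcm ⟨r, rfl⟩ ham
  obtain ⟨t, ht, htr⟩ := exists_isRes_of_lDvd hlcm ⟨r, rfl⟩ hbm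
  obtain ⟨u, hu⟩ := hlcm s t ⟨r, LDvd.of_mul_left hsr, LDvd.of_mul_left htr⟩
  exact ⟨s, t, u, hs, ht, hu⟩

end Residue

theorem stmt5_general {M : Type*} [Monoid M] (hc : Cancellative M)
    (hlcm : ∀ a b : M, (∃ m, LDvd a m ∧ LDvd b m) → ∃ c, IsRightLcm a b c)
    (a b c j : M) (hj : IsRightLcm a b j) :
    ((∃ r, IsRes c j r) ↔ ∃ s t u, IsRes c a s ∧ IsRes c b t ∧ IsRightLcm s t u) ∧
    (∀ s t u, IsRes c a s → IsRes c b t → IsRightLcm s t u → IsRes c j u) := by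
  have : IsLeftCancelMul M := ⟨fun x _ _ h => hc.1 x _ _ h⟩
  refine ⟨⟨fun ⟨_, hr⟩ => hj.exists_isRes_of_isRes hlcm hr, ?_⟩,
    fun _ _ _ => hj.isRes_of_isRes⟩
  exact fun ⟨_, _, u, hs, ht, hu⟩ => ⟨u, hj.isRes_of_isRes hs ht hu⟩

theorem stmt5 {M : Type*} [Monoid M] (hc : Cancellative M) (hcon : Conical M)
    (hlcm : ∀ a b : M, (∃ m, LDvd a m ∧ LDvd b m) → ∃ c, IsRightLcm a b c)
    (a b c j : M) (hj : IsRightLcm a b j) :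
    ((∃ r, IsRes c j r) ↔ ∃ s t u, IsRes c a s ∧ IsRes c b t ∧ IsRightLcm s t u) ∧
    (∀ s t u, IsRes c a s → IsRes c b t → IsRightLcm s t u → IsRes c j u) :=
  stmt5_general hc hlcm a b c j hj
end

section
/- Let M be a cancellative monoid and a a quasi-central element of M. If a = bc, then b is quasi-central if and only if c is quasi-central. -/
/-! Writing `x • Σ` for `xΣ` and `op x • Σ` for `Σx`, quasi-centrality of `b` and of `bc` give
`b • (c • Σ) = bc • Σ = op (bc) • Σ = op c • (b • Σ) = b • (op c • Σ)`, and cancelling `b`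
yields `c • Σ = op c • Σ`; symmetrically, cancelling `c` on the right recovers `b` from `c`. -/

open Pointwise MulOpposite

theorem Cancellative.isCancelMul {M : Type*} [Monoid M] (hc : Cancellative M) :
    IsCancelMul M where
  mul_left_cancel a _ _ := hc.1 a _ _
  mul_right_cancel a _ _ := hc.2 a _ _

theorem quasiCentral_iff_smul_set {M : Type*} [Monoid M] {a : M} :
    QuasiCentral a ↔ a • Irr M = op a • Irr M := Iff.rfl

section
variable {M : Type*} [Monoid M] {S : Set M} {b c : M}

theorem smul_set_eq_op_smul_set_of_mul_left [IsLeftCancelMul M] (hb : b • S = op b • S)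
    (hbc : (b * c) • S = op (b * c) • S) : c • S = op c • S := by
  apply Set.image_injective.2 (mul_right_injective b)
  change b • c • S = b • op c • S
  rw [smul_smul, hbc, op_mul, ← smul_smul, ← hb, smul_comm]

theorem smul_set_eq_op_smul_set_of_mul_right [IsRightCancelMul M] (hc : c • S = op c • S)
    (hbc : (b * c) • S = op (b * c) • S) : b • S = op b • S := by
  apply Set.image_injective.2 (mul_left_injective c)
  change op c • b • S = op c • op b • S
  rw [smul_comm, ← hc, smul_smul, hbc, op_mul, smul_smul]

end

theorem stmt7 {M : Type*} [Monoid M] (hc : Cancellative M)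
    (a b c : M) (ha : QuasiCentral a) (h : a = b * c) :
    (QuasiCentral b ↔ QuasiCentral c) := by
  subst h
  have := hc.isCancelMul
  simp only [quasiCentral_iff_smul_set] at ha ⊢
  exact ⟨fun hb => smul_set_eq_op_smul_set_of_mul_left hb ha,
    fun hc' => smul_set_eq_op_smul_set_of_mul_right hc' ha⟩
end

section
/- Let M be a divisibility monoid and a an element of M. Then a admits a local delta (i.e., the set {b\a : b ∈ M} is well-defined and admits a right lcm) if and only if a ∨ b exists for every b in M. -/
/-! If `a` has a right lcm with every element, so does every residue `r = b \ a`, because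
`r ∨ x` is obtained from `a ∨ b x` by cancelling `b` on the left; hence every finite set of
residues has a right lcm. And there are only finitely many residues: in the distributive
lattice `↓(a ∨ b)` the map `s ↦ a ∧ b s` embeds `↓r` into `↓a`, so `r` has at most as many
left divisors as `a`, and is therefore a product of boundedly many of the finitely many
irreducibles. -/

-- `LDvd b a` unfolds to `b ∣ a`, so Mathlib's divisibility lemmas apply to it directly.

section DivisibilityMonoid

variable {M : Type*} [Monoid M]

theorem IsRightLcm.symm {a b c : M} (h : IsRightLcm a b c) : IsRightLcm b a c :=
  ⟨h.2.1, h.1, fun m hb ha => h.2.2 m ha hb⟩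

theorem IsDivisibilityMonoid.ldvd_of_mul_ldvd_mul_left (hM : IsDivisibilityMonoid M)
    {c a b : M} (h : LDvd (c * a) (c * b)) : LDvd a b := by
  obtain ⟨d, hd⟩ := h
  exact ⟨d, hM.mul_left_cancel c _ _ (by rw [hd, mul_assoc])⟩

/- Distributivity at `a = x = y = z = 1` identifies every left gcd of `1` and `1`, in
particular every left divisor of `1`, with the join `1`. -/
theorem IsDivisibilityMonoid.eq_one_of_ldvd_one (hM : IsDivisibilityMonoid M) {u : M}
    (hu : LDvd u 1) : u = 1 := by
  have one_dvd_one : LDvd (1 : M) 1 := dvd_refl 1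
  have gcd_u : IsLeftGcd (1 : M) 1 u := ⟨hu, hu, fun d hd _ => dvd_trans hd (one_dvd u)⟩
  have gcd_one : IsLeftGcd (1 : M) 1 1 := ⟨one_dvd_one, one_dvd_one, fun _ h _ => h⟩
  have join_one : IsJoinIn (1 : M) 1 1 1 := ⟨one_dvd_one, one_dvd_one, one_dvd_one, fun m _ h _ => h⟩
  exact hM.distrib 1 1 1 1 one_dvd_one one_dvd_one one_dvd_one 1 u 1 1 1 join_one gcd_u gcd_one gcd_one
    join_one

theorem IsDivisibilityMonoid.ldvd_antisymm (hM : IsDivisibilityMonoid M) {x y : M}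
    (hxy : LDvd x y) (hyx : LDvd y x) : x = y := by
  obtain ⟨d, rfl⟩ := hxy
  obtain ⟨e, he⟩ := hyx
  have hde : d * e = 1 := (hM.mul_left_cancel x _ _ (by rw [mul_one, ← mul_assoc, ← he])).symm
  rw [hM.eq_one_of_ldvd_one ⟨e, hde.symm⟩, mul_one]

theorem IsDivisibilityMonoid.isRightLcm_of_mul_left (hM : IsDivisibilityMonoid M)
    {b r x j : M} (h : IsRightLcm (b * r) (b * x) (b * j)) : IsRightLcm r x j :=
  ⟨hM.ldvd_of_mul_ldvd_mul_left h.1, hM.ldvd_of_mul_ldvd_mul_left h.2.1, fun m hrm hxm =>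
    hM.ldvd_of_mul_ldvd_mul_left
      (h.2.2 (b * m) (mul_dvd_mul_left b hrm) (mul_dvd_mul_left b hxm))⟩

theorem IsRes.exists_isRightLcm (hM : IsDivisibilityMonoid M) {a b r : M}
    (ha : ∀ y : M, ∃ j, IsRightLcm a y j) (hr : IsRes b a r) (x : M) :
    ∃ j, IsRightLcm r x j := by
  obtain ⟨J, hJ⟩ := ha (b * x)
  have hbJ : LDvd b J := dvd_trans (dvd_mul_right b x) hJ.2.1
  have hJ' : IsRightLcm (b * r) (b * x) J :=
    ⟨hr.2.2 J hbJ hJ.1, hJ.2.1, fun m hrm hxm => hJ.2.2 m (dvd_trans hr.2.1 hrm) hxm⟩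
  obtain ⟨j, rfl⟩ := hbJ
  exact ⟨j, hM.isRightLcm_of_mul_left hJ'⟩

/- Distributivity in `↓(a ∨ b)`: `x = x ∧ (a ∨ b) = (x ∧ a) ∨ (x ∧ b) = (x ∧ a) ∨ b`. -/
theorem IsDivisibilityMonoid.isRightLcm_of_isLeftGcd (hM : IsDivisibilityMonoid M)
    {a b A x g : M} (hA : IsRightLcm a b A) (hbx : LDvd b x) (hxA : LDvd x A)
    (hg : IsLeftGcd a x g) : IsRightLcm b g x := by
  have join_ab : IsJoinIn A a b A := ⟨dvd_refl A, hA.1, hA.2.1, fun m _ => hA.2.2 m⟩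
  have gcd_xA : IsLeftGcd x A x := ⟨dvd_refl x, hxA, fun _ h _ => h⟩
  have gcd_xa : IsLeftGcd x a g := ⟨hg.2.1, hg.1, fun d h1 h2 => hg.2.2 d h2 h1⟩
  have gcd_xb : IsLeftGcd x b b := ⟨hbx, dvd_refl b, fun _ _ h => h⟩
  obtain ⟨j, hj⟩ := hM.exists_join A g b (dvd_trans hg.2.1 hxA) hA.2.1
  obtain rfl : x = j :=
    hM.distrib A x a b hxA hA.1 hA.2.1 A x g b j join_ab gcd_xA gcd_xa gcd_xb hj
  refine ⟨hbx, hg.2.1, fun m hbm hgm => ?_⟩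
  obtain ⟨h, hh⟩ := hM.exists_gcd x m
  exact dvd_trans (hj.2.2.2 h (dvd_trans hh.1 hxA) (hh.2.2 g hg.2.1 hgm) (hh.2.2 b hbx hbm))
    hh.2.1

def leftDivisors (x : M) : Set M := {b | LDvd b x}

def residues (a : M) : Set M := {r | ∃ b, IsRes b a r}

theorem IsDivisibilityMonoid.ncard_leftDivisors_le_of_isRes (hM : IsDivisibilityMonoid M)
    {a b r : M} (hr : IsRes b a r) : (leftDivisors r).ncard ≤ (leftDivisors a).ncard := by
  choose gcd hgcd using hM.exists_gcd
  have hlcm : ∀ s ∈ leftDivisors r, IsRightLcm b (gcd a (b * s)) (b * s) := fun s hs =>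
    hM.isRightLcm_of_isLeftGcd hr.symm (dvd_mul_right b s) (mul_dvd_mul_left b hs)
      (hgcd a (b * s))
  refine Set.ncard_le_ncard_of_injOn (fun s => gcd a (b * s)) (fun s _ => (hgcd a _).1)
    (fun s₁ hs₁ s₂ hs₂ heq => hM.mul_left_cancel b _ _ ?_) (hM.divisors_finite a)
  have h₁ := hlcm s₁ hs₁
  have h₂ := hlcm s₂ hs₂
  rw [← show gcd a (b * s₁) = gcd a (b * s₂) from heq] at h₂
  exact hM.ldvd_antisymm (h₁.2.2 _ h₂.1 h₂.2.1) (h₂.2.2 _ h₁.1 h₁.2.1)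

theorem IsDivisibilityMonoid.ncard_leftDivisors_lt (hM : IsDivisibilityMonoid M) {x y : M}
    (hxy : LDvd x y) (hne : x ≠ y) : (leftDivisors x).ncard < (leftDivisors y).ncard := by
  refine Set.ncard_lt_ncard ⟨fun d hd => dvd_trans hd hxy, fun hsub => ?_⟩
    (hM.divisors_finite y)
  exact hne (hM.ldvd_antisymm hxy (hsub (dvd_refl y)))

theorem IsDivisibilityMonoid.length_lt_ncard_leftDivisors (hM : IsDivisibilityMonoid M)
    (l : List M) (hl : ∀ p ∈ l, p ≠ 1) : l.length < (leftDivisors l.prod).ncard := by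
  induction l using List.reverseRecOn with
  | nil =>
    exact Set.ncard_pos (hM.divisors_finite 1) |>.mpr ⟨1, dvd_refl 1⟩
  | append_singleton t p ih =>
    have hp : p ≠ 1 := hl p (by simp)
    have hne : t.prod ≠ t.prod * p := fun h =>
      hp (hM.mul_left_cancel t.prod _ _ (by rw [← h, mul_one])).symm
    have := hM.ncard_leftDivisors_lt (dvd_mul_right t.prod p) hne
    simp only [List.length_append, List.length_singleton, List.prod_append, List.prod_singleton]
    have := ih fun q hq => hl q (by simp [hq])
    omega

theorem IsDivisibilityMonoid.finite_setOf_ncard_leftDivisors_le (hM : IsDivisibilityMonoid M)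
    (n : ℕ) : {x : M | (leftDivisors x).ncard ≤ n}.Finite := by
  have : Finite (Irr M) := hM.irr_finite.to_subtype
  refine ((List.finite_length_le (Irr M) n).image fun l => (l.map (↑)).prod).subset ?_
  intro x hx
  obtain ⟨l, hl, rfl⟩ := Submonoid.exists_list_of_mem_closure (hM.irr_gen x)
  have hlen := hM.length_lt_ncard_leftDivisors l fun p hp => (hl p hp).1
  lift l to List (Irr M) using hl
  rw [List.length_map] at hlen
  exact ⟨l, (hlen.trans_le hx).le, rfl⟩

theorem IsDivisibilityMonoid.residues_finite (hM : IsDivisibilityMonoid M) (a : M) :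
    (residues a).Finite :=
  (hM.finite_setOf_ncard_leftDivisors_le _).subset fun _ ⟨_, hb⟩ =>
    hM.ncard_leftDivisors_le_of_isRes hb

def IsRightLcmOf (T : Set M) (d : M) : Prop :=
  (∀ r ∈ T, LDvd r d) ∧ ∀ m, (∀ r ∈ T, LDvd r m) → LDvd d m

theorem Set.Finite.exists_isRightLcmOf {T : Set M} (hT : T.Finite)
    (hlcm : ∀ r ∈ T, ∀ x : M, ∃ j, IsRightLcm r x j) : ∃ d, IsRightLcmOf T d := by
  induction T, hT using Set.Finite.induction_on with
  | empty => exact ⟨1, fun _ h => h.elim, fun m _ => one_dvd m⟩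
  | @insert r T _ _ ih =>
    obtain ⟨d, hd_dvd, hd_min⟩ := ih fun s hs => hlcm s (Set.mem_insert_of_mem r hs)
    obtain ⟨j, hr, hdj, hj_min⟩ := hlcm r (Set.mem_insert r T) d
    refine ⟨j, ?_, fun m hm => hj_min m (hm r (Set.mem_insert r T))
      (hd_min m fun s hs => hm s (Set.mem_insert_of_mem r hs))⟩
    rintro s (rfl | hs)
    · exact hr
    · exact dvd_trans (hd_dvd s hs) hdj

end DivisibilityMonoid

theorem stmt10 {M : Type*} [Monoid M] (hM : IsDivisibilityMonoid M) (a : M) :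
    (∃ d, IsLocalDelta a d) ↔ ∀ b : M, ∃ j, IsRightLcm a b j := by
  constructor
  · rintro ⟨d, hres, -, -⟩ b
    obtain ⟨r, hr⟩ := hres b
    exact ⟨b * r, hr.symm⟩
  · intro ha
    have hres : ∀ b : M, ∃ r, IsRes b a r := fun b => by
      obtain ⟨J, hJ⟩ := ha b
      obtain ⟨r, rfl⟩ := hJ.2.1
      exact ⟨r, hJ.symm⟩
    obtain ⟨d, hd_dvd, hd_min⟩ := (hM.residues_finite a).exists_isRightLcmOf
      fun r ⟨_, hr⟩ => hr.exists_isRightLcm hM ha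
    exact ⟨d, hres, fun b r hr => hd_dvd r ⟨b, hr⟩,
      fun m hm => hd_min m fun r ⟨b, hr⟩ => hm b r hr⟩
end

section
/- Let M be a divisibility monoid, a an element of M, and b a quasi-central element of M. If a divides b (b = cad for some c, d), then the local delta Δ_R(a) exists and left-divides b. -/
/-!
Quasi-centrality gives `M b ⊆ b M`, so from `b = c₀ a d₀` the element `a` left-divides every
`c b`. Hence `c ∨ a` exists inside the lattice `↓(c b)` and `c \ a` left-divides `b`. The
residues `c \ a` thus form a subset of the finite lattice `↓(b)`, and their join there is the
local delta. Joins in a lattice `↓(n)` are genuine right lcms in `M`: a common right multiple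
`m` of `x` and `y` can be replaced by the left gcd of `m` and the join, which lies in `↓(n)`.
-/

section DivisibilityMonoid

variable {M : Type*} [Monoid M]

theorem LDvd.trans {x y z : M} (hxy : LDvd x y) (hyz : LDvd y z) : LDvd x z := by
  obtain ⟨e, rfl⟩ := hxy
  obtain ⟨f, rfl⟩ := hyz
  exact ⟨e * f, mul_assoc x e f⟩

theorem LDvd.mul_right (x y : M) : LDvd x (x * y) := ⟨y, rfl⟩

def IsSetRightLcm (S : Set M) (j : M) : Prop :=
  (∀ s ∈ S, LDvd s j) ∧ ∀ m, (∀ s ∈ S, LDvd s m) → LDvd j m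

theorem QuasiCentral.exists_mul_eq_mul {b x : M} (hb : QuasiCentral b)
    (hx : x ∈ Submonoid.closure (Irr M)) : ∃ x', x * b = b * x' := by
  induction hx using Submonoid.closure_induction with
  | mem σ hσ =>
    obtain ⟨σ', -, hσ'⟩ : σ * b ∈ (fun x => b * x) '' Irr M := hb ▸ ⟨σ, hσ, rfl⟩
    exact ⟨σ', hσ'.symm⟩
  | one => exact ⟨1, by rw [one_mul, mul_one]⟩
  | mul x y _ _ hx hy =>
    obtain ⟨x', hx'⟩ := hx
    obtain ⟨y', hy'⟩ := hy
    exact ⟨x' * y', by rw [mul_assoc, hy', ← mul_assoc, hx', mul_assoc]⟩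

theorem QuasiCentral.ldvd_mul_of_eq (hM : IsDivisibilityMonoid M) {a b c₀ d₀ : M}
    (hb : QuasiCentral b) (hbd : b = c₀ * a * d₀) (c : M) : LDvd a (c * b) := by
  obtain ⟨e, he⟩ := hb.exists_mul_eq_mul (hM.irr_gen (c₀ * c))
  refine ⟨d₀ * e, hM.mul_left_cancel c₀ _ _ ?_⟩
  calc c₀ * (c * b) = b * e := by rw [← mul_assoc, he]
    _ = c₀ * (a * (d₀ * e)) := by rw [hbd, mul_assoc, mul_assoc]

theorem IsJoinIn.isRightLcm (hM : IsDivisibilityMonoid M) {n x y j : M}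
    (hj : IsJoinIn n x y j) : IsRightLcm x y j := by
  obtain ⟨hjn, hxj, hyj, hjmin⟩ := hj
  refine ⟨hxj, hyj, fun m hxm hym => ?_⟩
  obtain ⟨g, hgj, hgm, hgmax⟩ := hM.exists_gcd j m
  exact (hjmin g (hgj.trans hjn) (hgmax x hxj hxm) (hgmax y hyj hym)).trans hgm

theorem exists_isRes_of_ldvd (hM : IsDivisibilityMonoid M) {c a n : M}
    (hc : LDvd c n) (ha : LDvd a n) : ∃ r, IsRes c a r := by
  obtain ⟨j, hj⟩ := hM.exists_join n c a hc ha
  obtain ⟨r, rfl⟩ := hj.2.1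
  exact ⟨r, hj.isRightLcm hM⟩

theorem IsRes.ldvd_of_ldvd_mul (hM : IsDivisibilityMonoid M) {c a r m : M}
    (hr : IsRes c a r) (ha : LDvd a (c * m)) : LDvd r m := by
  obtain ⟨e, he⟩ := hr.2.2 (c * m) (LDvd.mul_right c m) ha
  exact ⟨e, hM.mul_left_cancel c _ _ (by rw [he, mul_assoc])⟩

theorem exists_isSetRightLcm_ldvd_of_finite (hM : IsDivisibilityMonoid M) {S : Set M}
    (hS : S.Finite) {b : M} (hSb : ∀ s ∈ S, LDvd s b) :
    ∃ j, IsSetRightLcm S j ∧ LDvd j b := by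
  induction S, hS using Set.Finite.induction_on with
  | empty =>
    exact ⟨1, ⟨fun _ h => h.elim, fun m _ => ⟨m, (one_mul m).symm⟩⟩, ⟨b, (one_mul b).symm⟩⟩
  | @insert s S _ _ ih =>
    obtain ⟨j, ⟨hSj, hjmin⟩, hjb⟩ := ih fun t ht => hSb t (Set.mem_insert_of_mem s ht)
    obtain ⟨k, hk⟩ := hM.exists_join b s j (hSb s (Set.mem_insert s S)) hjb
    obtain ⟨hsk, hjk, hkmin⟩ := hk.isRightLcm hM
    refine ⟨k, ⟨?_, fun m hm => ?_⟩, hk.1⟩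
    · rintro t (rfl | ht)
      exacts [hsk, (hSj t ht).trans hjk]
    · exact hkmin m (hm s (Set.mem_insert s S))
        (hjmin m fun t ht => hm t (Set.mem_insert_of_mem s ht))

end DivisibilityMonoid

theorem stmt12 {M : Type*} [Monoid M] (hM : IsDivisibilityMonoid M)
    (a b : M) (hb : QuasiCentral b) (h : ∃ c d, b = c * a * d) :
    ∃ D, IsLocalDelta a D ∧ LDvd D b := by
  obtain ⟨c₀, d₀, hbd⟩ := h
  have ha : ∀ c, LDvd a (c * b) := hb.ldvd_mul_of_eq hM hbd
  have hres : ∀ c, ∃ r, IsRes c a r := fun c =>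
    exists_isRes_of_ldvd hM (LDvd.mul_right c b) (ha c)
  have hresb : ∀ r ∈ {r | ∃ c, IsRes c a r}, LDvd r b := fun r ⟨c, hr⟩ =>
    hr.ldvd_of_ldvd_mul hM (ha c)
  obtain ⟨D, ⟨hresD, hDmin⟩, hDb⟩ :=
    exists_isSetRightLcm_ldvd_of_finite hM ((hM.divisors_finite b).subset hresb) hresb
  exact ⟨D, ⟨hres, fun c r hr => hresD r ⟨c, hr⟩,
    fun m hm => hDmin m fun r ⟨c, hr⟩ => hm c r hr⟩, hDb⟩
end

section
/- Let M be a divisibility monoid. Every element a of M satisfying Δ_R(a) = a is quasi-central. -/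
/-!
Write `Σ` for the irreducibles. If `Δ_R(a) = a`, then for every `x` the residue `x \ a`
left-divides `a`, say `a = (x \ a) t`, and so `x a = x (x \ a) t = (x ∨ a) t` is a right
multiple `a c` of `a`. For `x ∈ Σ`, comparing lengths of factorizations into irreducibles (well
defined by a Jordan–Hölder argument in the distributive lattices of divisors) shows `c ∈ Σ`;
hence `Σ a ⊆ a Σ`. By right cancellation `Σ a` has as many elements as the finite set `Σ`,
while `a Σ` has at most that many, so the two sets coincide.
-/

theorem IsJoinIn.symm {M : Type*} [Monoid M] {w p q j : M} (h : IsJoinIn w p q j) :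
    IsJoinIn w q p j :=
  ⟨h.1, h.2.2.1, h.2.1, fun m hm hq hp => h.2.2.2 m hm hp hq⟩

theorem eq_one_or_eq_of_ldvd_irr {M : Type*} [Monoid M] {p d : M} (hp : p ∈ Irr M)
    (hd : LDvd d p) : d = 1 ∨ d = p := by
  obtain ⟨e, rfl⟩ := hd
  exact (hp.2 d e rfl).imp id fun he => by rw [he, mul_one]

theorem ldvd_mul_of_isLocalDelta_self {M : Type*} [Monoid M] {a : M} (ha : IsLocalDelta a a)
    (x : M) : LDvd a (x * a) := by
  obtain ⟨r, hr⟩ := ha.1 x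
  obtain ⟨s, hs⟩ := hr.2.1
  obtain ⟨t, ht⟩ := ha.2.1 x r hr
  exact ⟨s * t, by rw [← mul_assoc, ← hs, mul_assoc, ← ht]⟩

theorem quasiCentral_of_forall_irr {M : Type*} [Monoid M] {a : M} (hfin : (Irr M).Finite)
    (hinj : Function.Injective (· * a)) (h : ∀ x ∈ Irr M, ∃ c ∈ Irr M, x * a = a * c) :
    QuasiCentral a := by
  have hsub : (· * a) '' Irr M ⊆ (a * ·) '' Irr M := by
    rintro _ ⟨x, hx, rfl⟩
    obtain ⟨c, hc, hxc⟩ := h x hx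
    exact ⟨c, hc, hxc.symm⟩
  refine (Set.eq_of_subset_of_ncard_le hsub ?_ (hfin.image _)).symm
  calc ((a * ·) '' Irr M).ncard ≤ (Irr M).ncard := Set.ncard_image_le hfin
    _ = ((· * a) '' Irr M).ncard := (Set.ncard_image_of_injective _ hinj).symm

namespace IsDivisibilityMonoid

variable {M : Type*} [Monoid M]

/-- A unit is a left gcd of `1` and `1`, and distributivity in `↓(1)` forces that gcd to equal
the join `1`. -/
theorem conical (hM : IsDivisibilityMonoid M) : Conical M := by
  intro u hu
  obtain ⟨v, hv⟩ := hu.exists_right_inv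
  have hu1 : LDvd u 1 := ⟨v, hv.symm⟩
  have hgcd_u : IsLeftGcd (1 : M) 1 u := by
    refine ⟨hu1, hu1, fun d hd _ => ?_⟩
    obtain ⟨e, he⟩ := hd
    exact ⟨e * u, by rw [← mul_assoc, ← he, one_mul]⟩
  have hgcd_one : IsLeftGcd (1 : M) 1 1 := ⟨dvd_refl 1, dvd_refl 1, fun _ hd _ => hd⟩
  have hjoin : IsJoinIn (1 : M) 1 1 1 :=
    ⟨dvd_refl 1, dvd_refl 1, dvd_refl 1, fun m _ _ _ => one_dvd m⟩
  exact hM.distrib 1 1 1 1 (dvd_refl 1) (dvd_refl 1) (dvd_refl 1) 1 u 1 1 1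
    hjoin hgcd_u hgcd_one hgcd_one hjoin

theorem eq_one_of_mul_eq_one (hM : IsDivisibilityMonoid M) {d e : M} (h : d * e = 1) :
    d = 1 := by
  have hed : e * d = 1 :=
    hM.mul_left_cancel d _ _ (by rw [← mul_assoc, h, one_mul, mul_one])
  exact hM.conical d ⟨⟨d, e, h, hed⟩, rfl⟩

theorem ldvd_antisymm_s14 (hM : IsDivisibilityMonoid M) {a b : M} (hab : LDvd a b)
    (hba : LDvd b a) : a = b := by
  obtain ⟨d, rfl⟩ := hab
  obtain ⟨e, he⟩ := hba
  have hde : d * e = 1 := (hM.mul_left_cancel a _ _ (by rw [← mul_assoc, ← he, mul_one])).symm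
  rw [hM.eq_one_of_mul_eq_one hde, mul_one]

theorem eq_or_eq_of_ldvd_of_ldvd_join (hM : IsDivisibilityMonoid M) {w p q j m : M}
    (hq : q ∈ Irr M) (hj : IsJoinIn w p q j) (hpm : LDvd p m) (hmj : LDvd m j) :
    m = p ∨ m = j := by
  have hmw : LDvd m w := dvd_trans hmj hj.1
  obtain ⟨g, hg⟩ := hM.exists_gcd m q
  rcases eq_one_or_eq_of_ldvd_irr hq hg.2.1 with rfl | rfl
  · -- `m = m ∧ (p ∨ q) = (m ∧ p) ∨ (m ∧ q) = m ∧ p`, so `m ∣ p`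
    obtain ⟨G, hG⟩ := hM.exists_gcd m p
    have hmG : m = G :=
      hM.distrib w m p q hmw (dvd_trans hj.2.1 hj.1) (dvd_trans hj.2.2.1 hj.1) j m G 1 G hj
        ⟨dvd_refl m, hmj, fun _ hd _ => hd⟩ hG hg
        ⟨dvd_trans hG.1 hmw, dvd_refl G, one_dvd G, fun _ _ hGm _ => hGm⟩
    exact Or.inl (hM.ldvd_antisymm_s14 (hmG ▸ hG.2.1) hpm)
  · exact Or.inr (hM.ldvd_antisymm_s14 hmj (hj.2.2.2 m hmw hpm hg.1))

theorem exists_irr_mul_eq_of_isJoinIn (hM : IsDivisibilityMonoid M) {w p q j : M}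
    (hp : p ∈ Irr M) (hq : q ∈ Irr M) (hpq : p ≠ q) (hj : IsJoinIn w p q j) :
    ∃ q' ∈ Irr M, j = p * q' := by
  obtain ⟨q', hjq'⟩ := hj.2.1
  refine ⟨q', ⟨fun hq'1 => ?_, fun u v huv => ?_⟩, hjq'⟩
  · rw [hq'1, mul_one] at hjq'
    rcases eq_one_or_eq_of_ldvd_irr hp (hjq' ▸ hj.2.2.1) with hq1 | hqp
    exacts [hq.1 hq1, hpq hqp.symm]
  · rcases hM.eq_or_eq_of_ldvd_of_ldvd_join hq hj (dvd_mul_right p u)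
      ⟨v, by rw [hjq', huv, mul_assoc]⟩ with hpu | hpu
    · exact Or.inl (hM.mul_left_cancel p u 1 (by rw [hpu, mul_one]))
    · have huq' : u = q' := hM.mul_left_cancel p u q' (by rw [hpu, hjq'])
      exact Or.inr (hM.mul_left_cancel u v 1 (by rw [mul_one, ← huv, huq']))

/-- The diamond property behind the Jordan–Hölder argument: both sides factor through the join
`p q' = q p'` of `p` and `q`. -/
theorem exists_irr_of_mul_eq_mul (hM : IsDivisibilityMonoid M) {p q x y : M}
    (hp : p ∈ Irr M) (hq : q ∈ Irr M) (hpq : p ≠ q) (h : p * x = q * y) :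
    ∃ p' ∈ Irr M, ∃ q' ∈ Irr M, ∃ z, x = q' * z ∧ y = p' * z := by
  obtain ⟨j, hj⟩ := hM.exists_join (p * x) p q (dvd_mul_right p x) ⟨y, h⟩
  obtain ⟨q', hq', rfl⟩ := hM.exists_irr_mul_eq_of_isJoinIn hp hq hpq hj
  obtain ⟨p', hp', hjp'⟩ := hM.exists_irr_mul_eq_of_isJoinIn hq hp (Ne.symm hpq) hj.symm
  obtain ⟨z, hz⟩ := hj.1
  refine ⟨p', hp', q', hq', z, hM.mul_left_cancel p _ _ (by rw [hz, mul_assoc]), ?_⟩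
  exact hM.mul_left_cancel q _ _ (by rw [← h, hz, hjp', mul_assoc])

theorem exists_list_irr_prod_eq (hM : IsDivisibilityMonoid M) (a : M) :
    ∃ l : List M, (∀ p ∈ l, p ∈ Irr M) ∧ l.prod = a :=
  Submonoid.exists_list_of_mem_closure (hM.irr_gen a)

theorem eq_nil_of_prod_eq_one (hM : IsDivisibilityMonoid M) {l : List M}
    (hl : ∀ p ∈ l, p ∈ Irr M) (h : l.prod = 1) : l = [] := by
  cases l with
  | nil => rfl
  | cons q t =>
    rw [List.prod_cons] at h
    exact absurd (hM.eq_one_of_mul_eq_one h) (hl q List.mem_cons_self).1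

theorem length_eq_of_prod_eq (hM : IsDivisibilityMonoid M) {l₁ l₂ : List M}
    (h₁ : ∀ p ∈ l₁, p ∈ Irr M) (h₂ : ∀ p ∈ l₂, p ∈ Irr M) (h : l₁.prod = l₂.prod) :
    l₁.length = l₂.length := by
  induction hn : l₁.length using Nat.strong_induction_on generalizing l₁ l₂ with
  | _ n ih =>
  subst hn
  match l₁, l₂ with
  | [], l₂ => rw [hM.eq_nil_of_prod_eq_one h₂ h.symm]
  | p :: l, [] => exact absurd (hM.eq_nil_of_prod_eq_one h₁ h) (List.cons_ne_nil p l)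
  | p :: l, q :: l' =>
    simp only [List.forall_mem_cons, List.prod_cons] at h₁ h₂ h
    by_cases hpq : p = q
    · subst hpq
      simp [ih l.length (by simp) h₁.2 h₂.2 (hM.mul_left_cancel p _ _ h) rfl]
    · obtain ⟨p', hp', q', hq', z, hl, hl'⟩ := hM.exists_irr_of_mul_eq_mul h₁.1 h₂.1 hpq h
      obtain ⟨lz, hlz, rfl⟩ := hM.exists_list_irr_prod_eq z
      have hlen : l.length = lz.length + 1 := ih l.length (by simp) (l₂ := q' :: lz) h₁.2
        (List.forall_mem_cons.2 ⟨hq', hlz⟩) (by rw [hl, List.prod_cons]) rfl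
      have hlen' : lz.length + 1 = l'.length := ih (lz.length + 1) (by simp [hlen])
        (l₁ := p' :: lz) (List.forall_mem_cons.2 ⟨hp', hlz⟩) h₂.2
        (by rw [hl', List.prod_cons]) rfl
      simp [hlen, hlen']

theorem mem_irr_of_mul_eq_mul (hM : IsDivisibilityMonoid M) {x a c : M} (hx : x ∈ Irr M)
    (h : x * a = a * c) : c ∈ Irr M := by
  obtain ⟨la, hla, rfl⟩ := hM.exists_list_irr_prod_eq a
  obtain ⟨lc, hlc, rfl⟩ := hM.exists_list_irr_prod_eq c
  have hlen := hM.length_eq_of_prod_eq (l₁ := x :: la) (l₂ := la ++ lc)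
    (List.forall_mem_cons.2 ⟨hx, hla⟩) (List.forall_mem_append.2 ⟨hla, hlc⟩)
    (by rw [List.prod_cons, h, List.prod_append])
  have hlc1 : lc.length = 1 := by
    simp only [List.length_cons, List.length_append] at hlen
    omega
  obtain ⟨y, rfl⟩ := List.length_eq_one_iff.mp hlc1
  simpa using hlc

end IsDivisibilityMonoid

theorem stmt14 {M : Type*} [Monoid M] (hM : IsDivisibilityMonoid M)
    (a : M) (ha : IsLocalDelta a a) : QuasiCentral a := by
  refine quasiCentral_of_forall_irr hM.irr_finite (fun x y => hM.mul_right_cancel a x y) ?_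
  intro x hx
  obtain ⟨c, hc⟩ := ldvd_mul_of_isLocalDelta_self ha x
  exact ⟨c, hM.mem_irr_of_mul_eq_mul hx hc, hc⟩
end
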